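/- For the massive Gross–Neveu soliton U_ω with ω ∈ (0,1), ∫_ℝ (U_ω(x)² + conj(U_ω(x))²) dx = 2 log((1 + ω + √(1−ω²))/(1 + ω − √(1−ω²))), and consequently −(1/4) d/dω ∫_ℝ (U_ω² + conj(U_ω)²) dx = 1/(2ω√(1−ω²)). -/

import Mathlib

open MeasureTheory

/-- The massive Gross–Neveu line soliton profile. -/
noncomputable def grossNeveuSoliton (ω x : ℝ) : ℂ :=
  (↑(Real.sqrt (1 - ω ^ 2)) : ℂ) *
    ((↑(Real.sqrt (1 + ω) * Real.cosh (Real.sqrt (1 - ω ^ 2) * x)) : ℂ)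
      - Complex.I * (↑(Real.sqrt (1 - ω) * Real.sinh (Real.sqrt (1 - ω ^ 2) * x)) : ℂ)) /
    (↑(1 + ω * Real.cosh (2 * Real.sqrt (1 - ω ^ 2) * x)) : ℂ)

/-!
With `μ = √(1 - ω²)`, the identity `(1 + ω) cosh² t - (1 - ω) sinh² t = 1 + ω cosh 2t` turns the
integrand `2 Re U_ω²` into `2μ² / (1 + ω cosh 2μx)`. For `a, b > 0` the function
`x ↦ log ((a eˣ + b) / (b eˣ + a))` is an antiderivative of `(a² - b²) / (a² + b² + 2ab cosh x)`
with limits `± log (a / b)` at `±∞`; taking `a = 1 + μ`, `b = ω` gives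
`∫ (1 + ω cosh x)⁻¹ = (2 / μ) log ((1 + μ) / ω)`, so the integral is `2 log ((1 + μ) / ω)`,
i.e. `2 arsech ω`, whose derivative is `-2 / (ω μ)`.
-/

open Real Filter Topology ComplexConjugate

lemma Complex.sq_add_conj_sq (z : ℂ) :
    z ^ 2 + conj z ^ 2 = ((2 * (z.re ^ 2 - z.im ^ 2) : ℝ) : ℂ) := by
  rw [← map_pow, Complex.add_conj, sq z, Complex.mul_re, ← sq, ← sq]

lemma one_add_mul_cosh_sq_sub_one_sub_mul_sinh_sq (ω t : ℝ) :
    (1 + ω) * cosh t ^ 2 - (1 - ω) * sinh t ^ 2 = 1 + ω * cosh (2 * t) := by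
  rw [cosh_two_mul]
  linear_combination cosh_sq_sub_sinh_sq t

lemma grossNeveuSoliton_sq_add_conj_sq {ω : ℝ} (h₁ : -1 ≤ ω) (h₂ : ω ≤ 1) (x : ℝ) :
    grossNeveuSoliton ω x ^ 2 + conj (grossNeveuSoliton ω x) ^ 2
      = ((2 * (1 - ω ^ 2) / (1 + ω * cosh (2 * √(1 - ω ^ 2) * x)) : ℝ) : ℂ) := by
  have hμ : √(1 - ω ^ 2) ^ 2 = 1 - ω ^ 2 := sq_sqrt (by nlinarith)
  have hc : (√(1 + ω) * cosh (√(1 - ω ^ 2) * x)) ^ 2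
      - (√(1 - ω) * sinh (√(1 - ω ^ 2) * x)) ^ 2 = 1 + ω * cosh (2 * √(1 - ω ^ 2) * x) := by
    rw [mul_pow, mul_pow, sq_sqrt (by linarith), sq_sqrt (by linarith),
      one_add_mul_cosh_sq_sub_one_sub_mul_sinh_sq, ← mul_assoc]
  rw [Complex.sq_add_conj_sq, grossNeveuSoliton]
  congr 1
  simp only [Complex.div_ofReal_re, Complex.div_ofReal_im, Complex.mul_re, Complex.mul_im,
    Complex.sub_re, Complex.sub_im, Complex.ofReal_re, Complex.ofReal_im, Complex.I_re,
    Complex.I_im, zero_mul, one_mul, mul_zero, sub_zero, zero_sub, zero_add, add_zero]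
  generalize √(1 + ω) * cosh (√(1 - ω ^ 2) * x) = a at hc ⊢
  generalize √(1 - ω) * sinh (√(1 - ω ^ 2) * x) = b at hc ⊢
  generalize 1 + ω * cosh (2 * √(1 - ω ^ 2) * x) = c at hc ⊢
  generalize √(1 - ω ^ 2) = μ at hμ ⊢
  rw [← hμ]
  rcases eq_or_ne c 0 with rfl | hc₀
  · simp
  · field_simp
    linear_combination μ ^ 2 * hc

section LogRatio

variable {a b : ℝ}

lemma hasDerivAt_log_mul_exp_add_div (ha : 0 < a) (hb : 0 < b) (x : ℝ) :
    HasDerivAt (fun x => log ((a * exp x + b) / (b * exp x + a)))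
      ((a ^ 2 - b ^ 2) / (a ^ 2 + b ^ 2 + 2 * a * b * cosh x)) x := by
  have hA : 0 < a * exp x + b := by positivity
  have hB : 0 < b * exp x + a := by positivity
  have h := ((((hasDerivAt_exp x).const_mul a).add_const b).div
    (((hasDerivAt_exp x).const_mul b).add_const a) hB.ne').log (div_pos hA hB).ne'
  refine h.congr_deriv ?_
  rw [Pi.div_apply, cosh_eq, exp_neg]
  field_simp
  ring

lemma log_mul_exp_neg_add_div (x : ℝ) :
    log ((a * exp (-x) + b) / (b * exp (-x) + a)) = log ((b * exp x + a) / (a * exp x + b)) := by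
  congr 1
  rw [exp_neg]
  field_simp
  ring

lemma tendsto_log_mul_exp_add_div_atBot (ha : 0 < a) (hb : 0 < b) :
    Tendsto (fun x => log ((a * exp x + b) / (b * exp x + a))) atBot (𝓝 (log (b / a))) := by
  have h := ((tendsto_exp_atBot.const_mul a).add_const b).div
    ((tendsto_exp_atBot.const_mul b).add_const a) (by simpa using ha.ne')
  simpa using h.log (by simp [ha.ne', hb.ne'])

lemma tendsto_log_mul_exp_add_div_atTop (ha : 0 < a) (hb : 0 < b) :
    Tendsto (fun x => log ((a * exp x + b) / (b * exp x + a))) atTop (𝓝 (log (a / b))) := by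
  simpa [Function.comp_def, log_mul_exp_neg_add_div] using
    (tendsto_log_mul_exp_add_div_atBot hb ha).comp tendsto_neg_atTop_atBot

end LogRatio

lemma one_add_sq_div_two_le_cosh (x : ℝ) : 1 + x ^ 2 / 2 ≤ cosh x := by
  have h : (x / 2) ^ 2 ≤ sinh (x / 2) ^ 2 := by
    rw [sq_le_sq, abs_sinh]
    exact self_le_sinh_iff.2 (abs_nonneg _)
  have h2 := cosh_two_mul (x / 2)
  rw [mul_div_cancel₀ x two_ne_zero, cosh_sq] at h2
  nlinarith

lemma integrable_inv_add_mul_cosh {c d : ℝ} (hc : 0 < c) (hd : 0 ≤ d) :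
    Integrable fun x => (d + c * cosh x)⁻¹ := by
  refine (integrable_inv_one_add_sq.const_mul (2 / c)).mono' (by fun_prop) ?_
  refine .of_forall fun x => ?_
  have hpos : 0 < c * (1 + x ^ 2) / 2 := by positivity
  have hle : c * (1 + x ^ 2) / 2 ≤ d + c * cosh x := by
    nlinarith [one_add_sq_div_two_le_cosh x]
  calc ‖(d + c * cosh x)⁻¹‖ = (d + c * cosh x)⁻¹ := norm_of_nonneg (by positivity)
    _ ≤ (c * (1 + x ^ 2) / 2)⁻¹ := inv_anti₀ hpos hle
    _ = 2 / c * (1 + x ^ 2)⁻¹ := by field_simp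

theorem integral_sq_sub_sq_div_add_mul_cosh {a b : ℝ} (ha : 0 < a) (hb : 0 < b) :
    ∫ x, (a ^ 2 - b ^ 2) / (a ^ 2 + b ^ 2 + 2 * a * b * cosh x) = 2 * log (a / b) := by
  have hf : Integrable fun x => (a ^ 2 - b ^ 2) / (a ^ 2 + b ^ 2 + 2 * a * b * cosh x) := by
    simpa only [div_eq_mul_inv] using
      (integrable_inv_add_mul_cosh (by positivity) (by positivity)).const_mul (a ^ 2 - b ^ 2)
  rw [integral_of_hasDerivAt_of_tendsto (hasDerivAt_log_mul_exp_add_div ha hb) hf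
    (tendsto_log_mul_exp_add_div_atBot ha hb) (tendsto_log_mul_exp_add_div_atTop ha hb),
    log_div ha.ne' hb.ne', log_div hb.ne' ha.ne']
  ring

theorem integral_inv_one_add_mul_cosh {ω : ℝ} (h₀ : 0 < ω) (h₁ : ω < 1) :
    ∫ x, (1 + ω * cosh x)⁻¹ = 2 / √(1 - ω ^ 2) * log ((1 + √(1 - ω ^ 2)) / ω) := by
  have hμ : 0 < √(1 - ω ^ 2) := sqrt_pos.2 (by nlinarith)
  have hμ2 : √(1 - ω ^ 2) ^ 2 = 1 - ω ^ 2 := sq_sqrt (by nlinarith)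
  generalize √(1 - ω ^ 2) = μ at hμ hμ2 ⊢
  have h := integral_sq_sub_sq_div_add_mul_cosh (by positivity : 0 < 1 + μ) h₀
  have hintegrand : ∀ x, ((1 + μ) ^ 2 - ω ^ 2) / ((1 + μ) ^ 2 + ω ^ 2 + 2 * (1 + μ) * ω * cosh x)
      = μ * (1 + ω * cosh x)⁻¹ := fun x => by
    have : 0 < 1 + ω * cosh x := by positivity
    field_simp
    linear_combination -(1 + μ + ω * cosh x) * hμ2
  simp_rw [hintegrand, integral_const_mul] at h
  rw [div_mul_eq_mul_div, eq_div_iff hμ.ne', ← h, mul_comm]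

theorem integral_grossNeveuSoliton_sq_add_conj_sq {ω : ℝ} (h₀ : 0 < ω) (h₁ : ω < 1) :
    ∫ x, (grossNeveuSoliton ω x ^ 2 + conj (grossNeveuSoliton ω x) ^ 2)
      = ((2 * log ((1 + √(1 - ω ^ 2)) / ω) : ℝ) : ℂ) := by
  simp_rw [grossNeveuSoliton_sq_add_conj_sq (by linarith) h₁.le, integral_complex_ofReal]
  congr 1
  have hI := integral_inv_one_add_mul_cosh h₀ h₁
  set μ := √(1 - ω ^ 2)
  have hμ : 0 < μ := sqrt_pos.2 (by nlinarith)
  have hμ2 : μ ^ 2 = 1 - ω ^ 2 := sq_sqrt (by nlinarith)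
  calc ∫ x, 2 * (1 - ω ^ 2) / (1 + ω * cosh (2 * μ * x))
      = 2 * (1 - ω ^ 2) * ∫ x, (1 + ω * cosh (2 * μ * x))⁻¹ := by
        simp_rw [div_eq_mul_inv]; exact integral_const_mul _ _
    _ = 2 * (1 - ω ^ 2) * ((2 * μ)⁻¹ * ∫ t, (1 + ω * cosh t)⁻¹) := by
        rw [Measure.integral_comp_mul_left (fun t => (1 + ω * cosh t)⁻¹),
          abs_of_pos (by positivity), smul_eq_mul]
    _ = 2 * log ((1 + μ) / ω) := by
        rw [← hμ2, hI]
        field_simp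

lemma one_add_add_sqrt_div_one_add_sub_sqrt {ω : ℝ} (h₀ : 0 < ω) (h₁ : ω ≤ 1) :
    (1 + ω + √(1 - ω ^ 2)) / (1 + ω - √(1 - ω ^ 2)) = (1 + √(1 - ω ^ 2)) / ω := by
  have hμ2 : √(1 - ω ^ 2) ^ 2 = 1 - ω ^ 2 := sq_sqrt (by nlinarith)
  have hμ1 : √(1 - ω ^ 2) ≤ 1 := sqrt_le_one.2 (by nlinarith)
  rw [div_eq_div_iff (by linarith) h₀.ne']
  linear_combination hμ2

lemma hasDerivAt_log_one_add_sqrt_one_sub_sq_div {w : ℝ} (h₀ : 0 < w) (h₁ : w < 1) :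
    HasDerivAt (fun w => log ((1 + √(1 - w ^ 2)) / w)) (-1 / (w * √(1 - w ^ 2))) w := by
  have hμ : 0 < √(1 - w ^ 2) := sqrt_pos.2 (by nlinarith)
  have hμ2 : √(1 - w ^ 2) ^ 2 = 1 - w ^ 2 := sq_sqrt (by nlinarith)
  have hsqrt : HasDerivAt (fun w => √(1 - w ^ 2)) (-(2 * w) / (2 * √(1 - w ^ 2))) w := by
    simpa using ((hasDerivAt_pow 2 w).const_sub 1).sqrt (by nlinarith)
  have h := ((hsqrt.const_add 1).div (hasDerivAt_id w) h₀.ne').log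
    (div_pos (by positivity) h₀).ne'
  refine h.congr_deriv ?_
  simp only [Pi.div_apply, id]
  field_simp
  linear_combination -hμ2

/-- ∫ (U_ω² + conj(U_ω)²) dx = 2 log((1+ω+√(1−ω²))/(1+ω−√(1−ω²))), and
−(1/4) d/dω ∫ (U_ω² + conj(U_ω)²) dx = 1/(2ω√(1−ω²)). -/
theorem grossNeveuSoliton_square_integral (ω : ℝ) (hω : ω ∈ Set.Ioo (0 : ℝ) 1) :
    (∫ x : ℝ, (grossNeveuSoliton ω x ^ 2 + (starRingEnd ℂ) (grossNeveuSoliton ω x) ^ 2))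
      = Complex.ofReal (2 * Real.log ((1 + ω + Real.sqrt (1 - ω ^ 2))
          / (1 + ω - Real.sqrt (1 - ω ^ 2)))) ∧
    -(1/4 : ℂ) * deriv
        (fun w : ℝ => ∫ x : ℝ,
          (grossNeveuSoliton w x ^ 2 + (starRingEnd ℂ) (grossNeveuSoliton w x) ^ 2)) ω
      = Complex.ofReal (1 / (2 * ω * Real.sqrt (1 - ω ^ 2))) := by
  obtain ⟨h₀, h₁⟩ := hω
  refine ⟨by rw [integral_grossNeveuSoliton_sq_add_conj_sq h₀ h₁,
    one_add_add_sqrt_div_one_add_sub_sqrt h₀ h₁.le], ?_⟩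
  have hI : (fun w : ℝ => ∫ x, (grossNeveuSoliton w x ^ 2 + conj (grossNeveuSoliton w x) ^ 2))
      =ᶠ[𝓝 ω] fun w => ((2 * log ((1 + √(1 - w ^ 2)) / w) : ℝ) : ℂ) :=
    eventually_of_mem (Ioo_mem_nhds h₀ h₁) fun w hw =>
      integral_grossNeveuSoliton_sq_add_conj_sq hw.1 hw.2
  have hderiv := ((hasDerivAt_log_one_add_sqrt_one_sub_sq_div h₀ h₁).const_mul 2).ofReal_comp
  rw [hI.deriv_eq, hderiv.deriv]
  push_cast
  field_simp
  norm_num
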